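/- If r₁, r₂ ∈ ℝ³ are linearly independent unit vectors, then for any μ > 0 there exist k₁, k₂ > 0 such that -k₁(r₁ₓ)² - k₂(r₂ₓ)² ⪰ μ I (i.e., all eigenvalues are at least μ). -/

import Mathlib

/-!
Since `skew v *ᵥ x = v ⨯₃ x` and `skew v` is antisymmetric, `-(skew v)² = (skew v)ᵀ * skew v`
has quadratic form `x ↦ ‖v ⨯₃ x‖²`. A vector whose cross products with both `r₁` and `r₂`
vanish is parallel to both, hence zero, so `-(skew r₁)² - (skew r₂)²` is positive definite and
therefore dominates `c • 1` for some `c > 0` (its least eigenvalue). Take `k₁ = k₂ = μ / c`.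
-/

open Matrix

noncomputable def enorm3 (v : Fin 3 → ℝ) : ℝ := Real.sqrt (v ⬝ᵥ v)

def skew (v : Fin 3 → ℝ) : Matrix (Fin 3) (Fin 3) ℝ :=
  !![0, -v 2, v 1; v 2, 0, -v 0; -v 1, v 0, 0]

open scoped MatrixOrder in
theorem Matrix.PosDef.exists_pos_posSemidef_sub_smul_one {n : Type*} [Fintype n] [DecidableEq n]
    {A : Matrix n n ℝ} (hA : A.PosDef) : ∃ c : ℝ, 0 < c ∧ (A - c • 1).PosSemidef := by
  cases subsingleton_or_nontrivial (Matrix n n ℝ) with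
  | inl _ => exact ⟨1, one_pos, by rw [Subsingleton.elim (A - 1 • 1) 0]; exact .zero⟩
  | inr _ =>
    obtain ⟨c, hc, hle⟩ := (CFC.exists_pos_algebraMap_le_iff hA.isHermitian.isSelfAdjoint).2
      fun _ hx ↦ hA.isStrictlyPositive.spectrum_pos hx
    exact ⟨c, hc, by simpa [Matrix.le_iff, Algebra.algebraMap_eq_smul_one] using hle⟩

theorem eq_zero_of_cross_eq_zero_of_cross_eq_zero {F : Type*} [Field F] {u v x : Fin 3 → F}
    (huv : LinearIndependent F ![u, v]) (hu : u ⨯₃ x = 0) (hv : v ⨯₃ x = 0) : x = 0 := by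
  have hux : ¬LinearIndependent F ![u, x] := fun h ↦
    crossProduct_ne_zero_iff_linearIndependent.mpr h hu
  rw [LinearIndependent.pair_iff' (by simpa using huv.ne_zero 0), not_forall_not] at hux
  obtain ⟨a, rfl⟩ := hux
  have hvu : v ⨯₃ u ≠ 0 := by
    rw [← cross_anticomm, neg_ne_zero]
    exact crossProduct_ne_zero_iff_linearIndependent.mpr huv
  rw [map_smul, smul_eq_zero] at hv
  rw [hv.resolve_right hvu, zero_smul]

theorem skew_mulVec (v x : Fin 3 → ℝ) : skew v *ᵥ x = v ⨯₃ x := by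
  ext i; fin_cases i <;> simp [skew, cross_apply, mulVec, dotProduct, Fin.sum_univ_three] <;> ring

theorem skew_transpose (v : Fin 3 → ℝ) : (skew v)ᵀ = -skew v := by
  ext i j; fin_cases i <;> fin_cases j <;> simp [skew]

theorem neg_skew_sq (v : Fin 3 → ℝ) : -(skew v ^ 2) = (skew v)ᵀ * skew v := by
  rw [skew_transpose, neg_mul, sq]

theorem posDef_transpose_mul_skew_add {u v : Fin 3 → ℝ}
    (huv : LinearIndependent ℝ ![u, v]) :
    ((skew u)ᵀ * skew u + (skew v)ᵀ * skew v).PosDef := by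
  have hpsd := (posSemidef_conjTranspose_mul_self (skew u)).add
    (posSemidef_conjTranspose_mul_self (skew v))
  refine .of_dotProduct_mulVec_pos hpsd.isHermitian fun x hx ↦ ?_
  have hform : star x ⬝ᵥ ((skew u)ᵀ * skew u + (skew v)ᵀ * skew v) *ᵥ x
      = (u ⨯₃ x) ⬝ᵥ (u ⨯₃ x) + (v ⨯₃ x) ⬝ᵥ (v ⨯₃ x) := by
    rw [star_trivial, add_mulVec, dotProduct_add, ← mulVec_mulVec, ← mulVec_mulVec,
      dotProduct_mulVec, dotProduct_mulVec x, vecMul_transpose, vecMul_transpose, skew_mulVec,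
      skew_mulVec]
  have hsq (w : Fin 3 → ℝ) : 0 ≤ w ⬝ᵥ w := by simpa using dotProduct_star_self_nonneg w
  rw [hform]
  refine (add_nonneg (hsq _) (hsq _)).lt_of_ne' fun h ↦ hx ?_
  rw [add_eq_zero_iff_of_nonneg (hsq _) (hsq _), dotProduct_self_eq_zero,
    dotProduct_self_eq_zero] at h
  exact eq_zero_of_cross_eq_zero_of_cross_eq_zero huv h.1 h.2

theorem stmt3_general (r₁ r₂ : Fin 3 → ℝ)
    (hli : LinearIndependent ℝ ![r₁, r₂]) (μ : ℝ) (hμ : 0 < μ) :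
    ∃ k₁ k₂ : ℝ, 0 < k₁ ∧ 0 < k₂ ∧
      ((-(k₁ • (skew r₁ ^ 2)) - k₂ • (skew r₂ ^ 2)) - μ • (1 : Matrix (Fin 3) (Fin 3) ℝ)).PosSemidef := by
  obtain ⟨c, hc, hpsd⟩ :=
    (posDef_transpose_mul_skew_add hli).exists_pos_posSemidef_sub_smul_one
  have hk : 0 < μ / c := div_pos hμ hc
  refine ⟨μ / c, μ / c, hk, hk, ?_⟩
  convert hpsd.smul hk.le using 1
  rw [smul_sub, smul_smul, div_mul_cancel₀ μ hc.ne', ← neg_skew_sq, ← neg_skew_sq, smul_add,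
    smul_neg, smul_neg]
  abel

theorem stmt3 (r₁ r₂ : Fin 3 → ℝ)
    (h₁ : enorm3 r₁ = 1) (h₂ : enorm3 r₂ = 1)
    (hli : LinearIndependent ℝ ![r₁, r₂]) (μ : ℝ) (hμ : 0 < μ) :
    ∃ k₁ k₂ : ℝ, 0 < k₁ ∧ 0 < k₂ ∧
      ((-(k₁ • (skew r₁ ^ 2)) - k₂ • (skew r₂ ^ 2)) - μ • (1 : Matrix (Fin 3) (Fin 3) ℝ)).PosSemidef :=
  stmt3_general r₁ r₂ hli μ hμ
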